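/- Let f : ℝⁿ → ℝ be differentiable, λ-strongly convex (i.e. x ↦ f(x) − (λ/2)‖x‖₂² is convex) with λ > 0, attaining its minimum value f* at some point, and having coordinate-wise Lipschitz gradient with constants L_1,…,L_n > 0. Let S = ∑_{i=1}^n L_i and p_i = L_i/S. Then λ ≤ S and for every x ∈ ℝⁿ, ∑_{i=1}^n p_i · min( f(x + t_i e_i), f(x − t_i e_i) ) − f* ≤ (1 − λ/S)·( f(x) − f* ), where t_i = |∂_i f(x)| / L_i. -/

import Mathlib

/-!
Along a coordinate direction `eᵢ` the coordinate-wise Lipschitz bound gives the one-dimensional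
descent inequality `f (x + h eᵢ) ≤ f x + h ∂ᵢf(x) + Lᵢ h² / 2`; at `h = -∂ᵢf(x)/Lᵢ`, which is one of
the two trial points `x ± tᵢ eᵢ`, the decrease is `(∂ᵢf(x))² / (2Lᵢ)`. Averaging with weights
`Lᵢ / S` gives a decrease of `‖∇f(x)‖² / (2S)`, and strong convexity, minimised coordinatewise,
gives the Polyak–Łojasiewicz inequality `2λ (f x - f y) ≤ ‖∇f(x)‖²`. Comparing the descent
inequality with the strong convexity lower bound along `eᵢ` gives `λ ≤ Lᵢ ≤ S`.
-/

open Set Finset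

lemma apply_le_apply_zero_of_mul_deriv_nonpos {ψ ψ' : ℝ → ℝ}
    (hψ : ∀ t, HasDerivAt ψ (ψ' t) t) (hsign : ∀ t, t * ψ' t ≤ 0) (h : ℝ) : ψ h ≤ ψ 0 := by
  have hcont : Continuous ψ := continuous_iff_continuousAt.2 fun t ↦ (hψ t).continuousAt
  rcases le_or_gt 0 h with hh | hh
  · refine antitoneOn_of_hasDerivWithinAt_nonpos (convex_Icc 0 h) hcont.continuousOn
      (fun t _ ↦ (hψ t).hasDerivWithinAt) (fun t ht ↦ ?_) (left_mem_Icc.2 hh)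
      (right_mem_Icc.2 hh) hh
    rw [interior_Icc] at ht
    exact nonpos_of_mul_nonpos_right (hsign t) ht.1
  · refine monotoneOn_of_hasDerivWithinAt_nonneg (convex_Icc h 0) hcont.continuousOn
      (fun t _ ↦ (hψ t).hasDerivWithinAt) (fun t ht ↦ ?_) (left_mem_Icc.2 hh.le)
      (right_mem_Icc.2 hh.le) hh.le
    rw [interior_Icc] at ht
    exact nonneg_of_mul_nonpos_right (hsign t) ht.2

lemma apply_le_of_abs_deriv_sub_le {φ φ' : ℝ → ℝ} {L : ℝ} (hφ : ∀ t, HasDerivAt φ (φ' t) t)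
    (hlip : ∀ t, |φ' t - φ' 0| ≤ L * |t|) (h : ℝ) :
    φ h ≤ φ 0 + h * φ' 0 + L / 2 * h ^ 2 := by
  have hψ : ∀ t, HasDerivAt (fun t ↦ φ t - t * φ' 0 - L / 2 * t ^ 2) (φ' t - φ' 0 - L * t) t := by
    intro t
    refine (((hφ t).sub ((hasDerivAt_id' t).mul_const (φ' 0))).sub
      ((hasDerivAt_pow 2 t).const_mul (L / 2))).congr_deriv ?_
    norm_num
    ring
  have hsign : ∀ t, t * (φ' t - φ' 0 - L * t) ≤ 0 := fun t ↦ by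
    have h1 : t * (φ' t - φ' 0) ≤ |t| * |φ' t - φ' 0| := by
      rw [← abs_mul]; exact le_abs_self _
    have h2 : |t| * |φ' t - φ' 0| ≤ L * t ^ 2 := by
      calc |t| * |φ' t - φ' 0| ≤ |t| * (L * |t|) := by gcongr; exact hlip t
        _ = L * t ^ 2 := by rw [← sq_abs t]; ring
    nlinarith
  have := apply_le_apply_zero_of_mul_deriv_nonpos hψ hsign h
  linarith

section Directional

variable {E : Type*} [NormedAddCommGroup E] [NormedSpace ℝ E] {f : E → ℝ} {x v : E} {L : ℝ}

lemma Differentiable.apply_add_smul_le (hf : Differentiable ℝ f)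
    (hlip : ∀ t : ℝ, |fderiv ℝ f (x + t • v) v - fderiv ℝ f x v| ≤ L * |t|) (h : ℝ) :
    f (x + h • v) ≤ f x + h * fderiv ℝ f x v + L / 2 * h ^ 2 := by
  have hline : ∀ t : ℝ, HasDerivAt (fun t : ℝ ↦ f (x + t • v)) (fderiv ℝ f (x + t • v) v) t :=
    fun t ↦ (hf _).hasFDerivAt.comp_hasDerivAt t
      (by simpa using ((hasDerivAt_id t).smul_const v).const_add x)
  simpa using apply_le_of_abs_deriv_sub_le hline (by simpa using hlip) h

lemma Differentiable.min_apply_add_sub_smul_le (hf : Differentiable ℝ f) (hL : 0 < L)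
    (hlip : ∀ t : ℝ, |fderiv ℝ f (x + t • v) v - fderiv ℝ f x v| ≤ L * |t|) :
    min (f (x + (|fderiv ℝ f x v| / L) • v)) (f (x - (|fderiv ℝ f x v| / L) • v))
      ≤ f x - fderiv ℝ f x v ^ 2 / (2 * L) := by
  set g := fderiv ℝ f x v
  have hdesc := hf.apply_add_smul_le hlip (-g / L)
  have hval : f x + -g / L * g + L / 2 * (-g / L) ^ 2 = f x - g ^ 2 / (2 * L) := by
    field_simp
    ring
  rw [hval] at hdesc
  rcases le_or_gt 0 g with hg | hg
  · rw [abs_of_nonneg hg]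
    rw [neg_div, neg_smul, ← sub_eq_add_neg] at hdesc
    exact (min_le_right _ _).trans hdesc
  · rw [abs_of_neg hg]
    exact (min_le_left _ _).trans hdesc

end Directional

lemma ConvexOn.add_le_of_hasFDerivAt {E : Type*} [NormedAddCommGroup E] [NormedSpace ℝ E]
    {u : E → ℝ} {u' : E →L[ℝ] ℝ} {x : E} (hu : ConvexOn ℝ univ u) (hx : HasFDerivAt u u' x)
    (y : E) : u x + u' (y - x) ≤ u y := by
  have hline : ConvexOn ℝ univ (u ∘ AffineMap.lineMap (k := ℝ) x y) := by
    simpa using hu.comp_affineMap (AffineMap.lineMap (k := ℝ) x y)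
  have hderiv : HasDerivAt (u ∘ AffineMap.lineMap (k := ℝ) x y) (u' (y - x)) 0 := by
    refine hx.comp_hasDerivAt_of_eq 0 ?_ (by simp)
    exact AffineMap.hasDerivAt_lineMap
  have := hline.le_slope_of_hasDerivAt (mem_univ 0) (mem_univ 1) zero_lt_one hderiv
  rw [slope_def_field] at this
  simp only [Function.comp_apply, AffineMap.lineMap_apply_zero, AffineMap.lineMap_apply_one,
    sub_zero, div_one] at this
  linarith

lemma hasFDerivAt_sum_sq {ι : Type*} [Fintype ι] (x : ι → ℝ) :
    HasFDerivAt (fun y : ι → ℝ ↦ ∑ i, y i ^ 2)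
      (∑ i, (2 * x i) • ContinuousLinearMap.proj (R := ℝ) (φ := fun _ : ι ↦ ℝ) i) x := by
  refine HasFDerivAt.fun_sum fun i _ ↦ ?_
  simpa using (hasFDerivAt_apply (𝕜 := ℝ) i x).pow 2

section StrongConvexity

variable {ι : Type*} [Fintype ι] {f : (ι → ℝ) → ℝ} {lam : ℝ}

lemma add_fderiv_add_sum_sq_le_of_convexOn (hf : Differentiable ℝ f)
    (hsc : ConvexOn ℝ univ fun x : ι → ℝ ↦ f x - lam / 2 * ∑ i, x i ^ 2) (x y : ι → ℝ) :
    f x + fderiv ℝ f x (y - x) + lam / 2 * ∑ i, (y i - x i) ^ 2 ≤ f y := by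
  have h := hsc.add_le_of_hasFDerivAt
    ((hf x).hasFDerivAt.sub ((hasFDerivAt_sum_sq x).const_mul (lam / 2))) y
  have hq : ∑ i, (y i - x i) ^ 2 = ∑ i, y i ^ 2 - ∑ i, x i ^ 2 - ∑ i, 2 * x i * (y i - x i) := by
    rw [← sum_sub_distrib, ← sum_sub_distrib]
    exact sum_congr rfl fun i _ ↦ by ring
  simp only [sub_apply, smul_apply, FunLike.coe_sum, Finset.sum_apply,
    ContinuousLinearMap.proj_apply, smul_eq_mul, Pi.sub_apply] at h
  rw [hq]
  linarith

lemma mul_sum_sq_le_of_convexOn (hf : Differentiable ℝ f)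
    (hsc : ConvexOn ℝ univ fun x : ι → ℝ ↦ f x - lam / 2 * ∑ i, x i ^ 2) {x v : ι → ℝ} {L : ℝ}
    (hlip : ∀ t : ℝ, |fderiv ℝ f (x + t • v) v - fderiv ℝ f x v| ≤ L * |t|) :
    lam * ∑ i, v i ^ 2 ≤ L := by
  have hup := hf.apply_add_smul_le hlip 1
  have hlow := add_fderiv_add_sum_sq_le_of_convexOn hf hsc x (x + (1 : ℝ) • v)
  simp only [one_smul, add_sub_cancel_left, Pi.add_apply] at hup hlow
  linarith

lemma two_mul_sub_le_sum_sq_fderiv_single [DecidableEq ι] (hf : Differentiable ℝ f)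
    (hlam : 0 < lam) (hsc : ConvexOn ℝ univ fun x : ι → ℝ ↦ f x - lam / 2 * ∑ i, x i ^ 2)
    (x y : ι → ℝ) :
    2 * lam * (f x - f y) ≤ ∑ i, fderiv ℝ f x (Pi.single i 1) ^ 2 := by
  set g := fun i ↦ fderiv ℝ f x (Pi.single i 1)
  have hlow := add_fderiv_add_sum_sq_le_of_convexOn hf hsc x y
  have hcoord : fderiv ℝ f x (y - x) = ∑ i, (y i - x i) * g i := by
    conv_lhs => rw [pi_eq_sum_univ' (y - x), map_sum]
    simp [g]
  calc 2 * lam * (f x - f y)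
      ≤ ∑ i, -(2 * lam * ((y i - x i) * g i) + lam ^ 2 * (y i - x i) ^ 2) := by
        rw [sum_neg_distrib, sum_add_distrib, ← mul_sum, ← mul_sum, ← hcoord]
        nlinarith
    _ ≤ ∑ i, g i ^ 2 :=
        sum_le_sum fun i _ ↦ by nlinarith [sq_nonneg (lam * (y i - x i) + g i)]

end StrongConvexity

lemma sum_div_mul_sub_sq_div {ι : Type*} [Fintype ι] {L : ι → ℝ} (hL : ∀ i, L i ≠ 0)
    (hS : ∑ j, L j ≠ 0) (g : ι → ℝ) (c : ℝ) :
    ∑ i, (L i / ∑ j, L j) * (c - g i ^ 2 / (2 * L i)) = c - (∑ i, g i ^ 2) / (2 * ∑ j, L j) := by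
  have hterm : ∀ i, (L i / ∑ j, L j) * (c - g i ^ 2 / (2 * L i))
      = (L i / ∑ j, L j) * c - g i ^ 2 / (2 * ∑ j, L j) := fun i ↦ by
    field_simp [hL i]
  rw [sum_congr rfl fun i _ ↦ hterm i, sum_sub_distrib, ← sum_mul, ← sum_div, ← sum_div,
    div_self hS, one_mul]

theorem stp_is_strongly_convex_contraction_general
    (n : ℕ) (hn : 0 < n) (f : (Fin n → ℝ) → ℝ) (hf : Differentiable ℝ f)
    (lam : ℝ) (hlam : 0 < lam)
    (hsc : ConvexOn ℝ Set.univ (fun x : Fin n → ℝ =>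
      f x - (lam / 2) * ∑ i, (x i) ^ 2))
    (xstar : Fin n → ℝ)
    (L : Fin n → ℝ) (hL : ∀ i, 0 < L i)
    (hlip : ∀ (i : Fin n) (x : Fin n → ℝ) (h : ℝ),
      |fderiv ℝ f (x + h • (Pi.single i 1 : Fin n → ℝ)) ((Pi.single i 1 : Fin n → ℝ))
          - fderiv ℝ f x ((Pi.single i 1 : Fin n → ℝ))| ≤ L i * |h|) :
    lam ≤ (∑ j, L j) ∧
    ∀ x : Fin n → ℝ,
      (∑ i, (L i / ∑ j, L j) *
        min (f (x + (|fderiv ℝ f x ((Pi.single i 1 : Fin n → ℝ))| / L i) • (Pi.single i 1 : Fin n → ℝ)))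
            (f (x - (|fderiv ℝ f x ((Pi.single i 1 : Fin n → ℝ))| / L i) • (Pi.single i 1 : Fin n → ℝ))))
        - f xstar
      ≤ (1 - lam / ∑ j, L j) * (f x - f xstar) := by
  have hlamS : lam ≤ ∑ j, L j := by
    have hi : lam ≤ L ⟨0, hn⟩ := by
      simpa [Pi.single_apply] using mul_sum_sq_le_of_convexOn hf hsc (hlip ⟨0, hn⟩ 0)
    exact hi.trans (single_le_sum (fun j _ ↦ (hL j).le) (mem_univ _))
  refine ⟨hlamS, fun x ↦ ?_⟩
  have hS : 0 < ∑ j, L j := hlam.trans_le hlamS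
  have hPL := two_mul_sub_le_sum_sq_fderiv_single hf hlam hsc x xstar
  calc _ ≤ ∑ i, (L i / ∑ j, L j) * (f x - fderiv ℝ f x (Pi.single i 1) ^ 2 / (2 * L i))
          - f xstar := by
        refine sub_le_sub_right (sum_le_sum fun i _ ↦ mul_le_mul_of_nonneg_left ?_
          (div_nonneg (hL i).le hS.le)) _
        exact hf.min_apply_add_sub_smul_le (hL i) (hlip i x)
    _ = f x - (∑ i, fderiv ℝ f x (Pi.single i 1) ^ 2) / (2 * ∑ j, L j) - f xstar := by
        rw [sum_div_mul_sub_sq_div (fun i ↦ (hL i).ne') hS.ne']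
    _ ≤ (1 - lam / ∑ j, L j) * (f x - f xstar) := by
        have hrate : (lam / ∑ j, L j) * (f x - f xstar)
            = 2 * lam * (f x - f xstar) / (2 * ∑ j, L j) := by
          field_simp
        nlinarith [div_le_div_of_nonneg_right hPL (by positivity : (0 : ℝ) ≤ 2 * ∑ j, L j)]

/-- Per-iteration linear contraction of `STP_IS` for a `λ`-strongly convex `f`
attaining its minimum: `λ ≤ S` and
`∑ᵢ pᵢ min(f(x + tᵢeᵢ), f(x − tᵢeᵢ)) − f* ≤ (1 − λ/S)(f(x) − f*)`
with `tᵢ = |∂ᵢf(x)|/Lᵢ`, `pᵢ = Lᵢ/S`, `S = ∑ᵢ Lᵢ`. -/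
theorem stp_is_strongly_convex_contraction
    (n : ℕ) (hn : 0 < n) (f : (Fin n → ℝ) → ℝ) (hf : Differentiable ℝ f)
    (lam : ℝ) (hlam : 0 < lam)
    (hsc : ConvexOn ℝ Set.univ (fun x : Fin n → ℝ =>
      f x - (lam / 2) * ∑ i, (x i) ^ 2))
    (xstar : Fin n → ℝ) (hmin : ∀ x, f xstar ≤ f x)
    (L : Fin n → ℝ) (hL : ∀ i, 0 < L i)
    (hlip : ∀ (i : Fin n) (x : Fin n → ℝ) (h : ℝ),
      |fderiv ℝ f (x + h • (Pi.single i 1 : Fin n → ℝ)) ((Pi.single i 1 : Fin n → ℝ))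
          - fderiv ℝ f x ((Pi.single i 1 : Fin n → ℝ))| ≤ L i * |h|) :
    lam ≤ (∑ j, L j) ∧
    ∀ x : Fin n → ℝ,
      (∑ i, (L i / ∑ j, L j) *
        min (f (x + (|fderiv ℝ f x ((Pi.single i 1 : Fin n → ℝ))| / L i) • (Pi.single i 1 : Fin n → ℝ)))
            (f (x - (|fderiv ℝ f x ((Pi.single i 1 : Fin n → ℝ))| / L i) • (Pi.single i 1 : Fin n → ℝ))))
        - f xstar
      ≤ (1 - lam / ∑ j, L j) * (f x - f xstar) :=
  stp_is_strongly_convex_contraction_general n hn f hf lam hlam hsc xstar L hL hlip
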